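/- arXiv:1912.05149 — 5 statements merged into one kernel-verified Lean document; each statement's English description precedes it below -/
import Mathlib

section
/- Let F : 2^V → ℝ be a set function, and define F^r(R) = F(V \ R). If −F has submodularity ratio γ_f and curvature α_f, then F^r has submodularity ratio γ_r = 1 − α_f and curvature α_r = 1 − γ_f. -/
/-!
Write `g = -F`, so that `F^r(R) = -g(Rᶜ)`. For `v ∉ R` the gain of `v` at `R` under `F^r` is the
gain of `v` under `g` at `(insert v R)ᶜ`, and `R ↦ (insert v R)ᶜ` reverses inclusion among the sets
avoiding `v`. Hence the submodularity-ratio inequality `γ ρ_v(T) ≤ ρ_v(S)` (`S ⊆ T`) for `F^r` is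
the curvature inequality `ρ_v(T') ≥ γ ρ_v(S')` (`S' ⊆ T'`) for `g`, i.e. curvature `1 - γ`, and
vice versa. Since the reversal is an involution, the two feasible sets are mirror images under
`x ↦ 1 - x`, which exchanges greatest and least elements.
-/

/-- `γ` satisfies the submodularity-ratio inequalities for `g`. -/
def SubmodIneq {V : Type*} [DecidableEq V] [Fintype V] (g : Finset V → ℝ) (γ : ℝ) : Prop :=
  ∀ (S U : Finset V) (v : V), v ∉ S ∪ U →
    γ * (g (insert v (S ∪ U)) - g (S ∪ U)) ≤ g (insert v S) - g S

/-- `α` satisfies the curvature inequalities for `g`. -/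
def CurvIneq {V : Type*} [DecidableEq V] [Fintype V] (g : Finset V → ℝ) (α : ℝ) : Prop :=
  ∀ (S U : Finset V) (v : V), v ∉ S ∪ U →
    g (insert v (S ∪ U)) - g (S ∪ U) ≥ (1 - α) * (g (insert v S) - g S)

open Finset

section Reversal

variable {V : Type*} [DecidableEq V] [Fintype V]

def reversal (g : Finset V → ℝ) (R : Finset V) : ℝ := -g Rᶜ

@[simp]
lemma reversal_reversal (g : Finset V → ℝ) : reversal (reversal g) = g := by
  funext R
  simp [reversal]

lemma reversal_insert_sub (g : Finset V → ℝ) {R : Finset V} {v : V} (hv : v ∉ R) :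
    reversal g (insert v R) - reversal g R = g (insert v (insert v R)ᶜ) - g (insert v R)ᶜ := by
  have hRc : insert v (insert v R)ᶜ = Rᶜ := by
    rw [compl_insert, insert_erase (mem_compl.2 hv)]
  rw [hRc, reversal, reversal]
  ring

lemma submodIneq_iff_subset (g : Finset V → ℝ) (γ : ℝ) :
    SubmodIneq g γ ↔ ∀ S T : Finset V, ∀ v, S ⊆ T → v ∉ T →
      γ * (g (insert v T) - g T) ≤ g (insert v S) - g S := by
  refine ⟨fun h S T v hST hvT => ?_, fun h S U v hv => h S (S ∪ U) v subset_union_left hv⟩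
  simpa only [union_eq_right.2 hST] using h S T v (by rwa [union_eq_right.2 hST])

lemma curvIneq_iff_subset (g : Finset V → ℝ) (α : ℝ) :
    CurvIneq g α ↔ ∀ S T : Finset V, ∀ v, S ⊆ T → v ∉ T →
      g (insert v T) - g T ≥ (1 - α) * (g (insert v S) - g S) := by
  refine ⟨fun h S T v hST hvT => ?_, fun h S U v hv => h S (S ∪ U) v subset_union_left hv⟩
  simpa only [union_eq_right.2 hST] using h S T v (by rwa [union_eq_right.2 hST])

lemma compl_insert_subset_compl_insert {S T : Finset V} (v : V) (hST : S ⊆ T) :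
    (insert v T)ᶜ ⊆ (insert v S)ᶜ :=
  compl_subset_compl.2 (insert_subset_insert v hST)

lemma CurvIneq.submodIneq_reversal {g : Finset V → ℝ} {γ : ℝ} (h : CurvIneq g (1 - γ)) :
    SubmodIneq (reversal g) γ := by
  rw [submodIneq_iff_subset]
  intro S T v hST hvT
  rw [reversal_insert_sub g (fun hvS => hvT (hST hvS)), reversal_insert_sub g hvT]
  have := (curvIneq_iff_subset g _).1 h _ _ v (compl_insert_subset_compl_insert v hST) (by simp)
  rwa [sub_sub_cancel] at this

lemma SubmodIneq.curvIneq_reversal {g : Finset V → ℝ} {α : ℝ} (h : SubmodIneq g (1 - α)) :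
    CurvIneq (reversal g) α := by
  rw [curvIneq_iff_subset]
  intro S T v hST hvT
  rw [reversal_insert_sub g (fun hvS => hvT (hST hvS)), reversal_insert_sub g hvT]
  exact (submodIneq_iff_subset g _).1 h _ _ v (compl_insert_subset_compl_insert v hST) (by simp)

lemma submodIneq_reversal_iff (g : Finset V → ℝ) (γ : ℝ) :
    SubmodIneq (reversal g) γ ↔ CurvIneq g (1 - γ) := by
  refine ⟨fun h => ?_, CurvIneq.submodIneq_reversal⟩
  rw [← sub_sub_cancel 1 γ] at h
  simpa using h.curvIneq_reversal

lemma curvIneq_reversal_iff (g : Finset V → ℝ) (α : ℝ) :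
    CurvIneq (reversal g) α ↔ SubmodIneq g (1 - α) := by
  refine ⟨fun h => ?_, SubmodIneq.curvIneq_reversal⟩
  rw [← sub_sub_cancel 1 α] at h
  simpa using h.submodIneq_reversal

end Reversal

theorem reverse_submodularityRatio_curvature_general
    {V : Type*} [DecidableEq V] [Fintype V] (F : Finset V → ℝ) (γf αf : ℝ)
    (hγf : IsGreatest {γ : ℝ | SubmodIneq (fun S => -F S) γ} γf)
    (hαf : IsLeast {α : ℝ | CurvIneq (fun S => -F S) α} αf) :
    IsGreatest {γ : ℝ | SubmodIneq (fun R => F Rᶜ) γ} (1 - αf) ∧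
    IsLeast {α : ℝ | CurvIneq (fun R => F Rᶜ) α} (1 - γf) := by
  have hFr : (fun R => F Rᶜ) = reversal (fun S => -F S) := by
    funext R
    simp [reversal]
  rw [hFr]
  refine ⟨⟨?_, fun γ hγ => ?_⟩, ⟨?_, fun α hα => ?_⟩⟩
  · rw [Set.mem_ofPred_eq, submodIneq_reversal_iff, sub_sub_cancel]
    exact hαf.1
  · linarith [hαf.2 ((submodIneq_reversal_iff _ γ).1 hγ)]
  · rw [Set.mem_ofPred_eq, curvIneq_reversal_iff, sub_sub_cancel]
    exact hγf.1
  · linarith [hγf.2 ((curvIneq_reversal_iff _ α).1 hα)]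

/-- If `-F` has submodularity ratio `γf` and curvature `αf`, then `F^r(R) = F(V \ R)`
has submodularity ratio `1 - αf` and curvature `1 - γf`. -/
theorem reverse_submodularityRatio_curvature
    {V : Type*} [DecidableEq V] [Fintype V] (F : Finset V → ℝ) (γf αf : ℝ)
    (hincF : ∀ S T : Finset V, S ⊂ T → (-F S) < (-F T))
    (hincFr : ∀ R₁ R₂ : Finset V, R₁ ⊂ R₂ → F R₁ᶜ < F R₂ᶜ)
    (hγf : IsGreatest {γ : ℝ | SubmodIneq (fun S => -F S) γ} γf)
    (hαf : IsLeast {α : ℝ | CurvIneq (fun S => -F S) α} αf) :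
    IsGreatest {γ : ℝ | SubmodIneq (fun R => F Rᶜ) γ} (1 - αf) ∧
    IsLeast {α : ℝ | CurvIneq (fun R => F Rᶜ) α} (1 - γf) :=
  reverse_submodularityRatio_curvature_general F γf αf hγf hαf
end

section
/- Consider the linear program: maximize ∑_{i=1}^{N} x_i subject to x_i ≥ 0 and, for each t = 1,…,N, the constraint (1−α)(N−t+1)·x_t − ((1−γ)/γ)·∑_{i=1}^{t−1} x_i ≤ 1, where 0 < γ < 1 and 0 ≤ α < 1. Then the optimal value equals (γ/(1−γ))·(∏_{i=1}^{N}(1 + (1−γ)/(γ(N−i+1)(1−α))) − 1). -/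
/-!
Write `c = (1 - γ) / γ` and `a t = (1 - α) (N - t)`. Constraint `t` bounds `x t` by
`(1 + c ∑_{i<t} x i) / a t`, so by induction `1 + c ∑_{i<k} x i ≤ ∏_{i<k} (1 + c / a i)` for every
feasible `x`. The point making every constraint tight attains equality for all `k`.
-/

open Finset

theorem Fin.sum_Iio_eq_sum_range {M : Type*} [AddCommMonoid M] {N : ℕ} (f : ℕ → M) (t : Fin N) :
    ∑ i ∈ Iio t, f i = ∑ i ∈ range t, f i := by
  rw [← Nat.Iio_eq_range, ← Fin.map_valEmbedding_Iio, sum_map]; rfl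

section

variable (c : ℝ) (a : ℕ → ℝ)

/-- `a t * x t = ∏_{i<t} (1 + c / a i) = 1 + c ∑_{i<t} x i`, i.e. constraint `t` is tight. -/
noncomputable def tightSolution (t : ℕ) : ℝ := (∏ i ∈ range t, (1 + c / a i)) / a t

theorem one_add_mul_sum_tightSolution (k : ℕ) :
    1 + c * ∑ i ∈ range k, tightSolution c a i = ∏ i ∈ range k, (1 + c / a i) := by
  induction k with
  | zero => simp
  | succ k ih => rw [sum_range_succ, prod_range_succ, ← ih, tightSolution, ← ih]; ring

theorem tightSolution_constraint {t : ℕ} (ht : a t ≠ 0) :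
    a t * tightSolution c a t - c * ∑ i ∈ range t, tightSolution c a i = 1 := by
  rw [tightSolution, mul_div_cancel₀ _ ht, ← one_add_mul_sum_tightSolution]; ring

theorem tightSolution_nonneg (hc : 0 ≤ c) {t : ℕ} (ha : ∀ i ≤ t, 0 < a i) :
    0 ≤ tightSolution c a t :=
  div_nonneg (prod_nonneg fun i hi =>
      add_nonneg zero_le_one (div_nonneg hc (ha i (mem_range.mp hi).le).le))
    (ha t le_rfl).le

theorem one_add_mul_sum_le_prod (hc : 0 ≤ c) {k : ℕ} (ha : ∀ i < k, 0 < a i) {x : ℕ → ℝ}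
    (hx : ∀ t < k, a t * x t - c * ∑ i ∈ range t, x i ≤ 1) :
    1 + c * ∑ i ∈ range k, x i ≤ ∏ i ∈ range k, (1 + c / a i) := by
  induction k with
  | zero => simp
  | succ k ih =>
    have hak := ha k k.lt_succ_self
    set S := ∑ i ∈ range k, x i
    have hxk : c * x k ≤ (1 + c * S) * (c / a k) :=
      calc c * x k ≤ c * ((1 + c * S) / a k) := by
            gcongr; rw [le_div_iff₀ hak]; linarith [hx k k.lt_succ_self]
        _ = (1 + c * S) * (c / a k) := by ring
    rw [sum_range_succ, prod_range_succ]
    calc 1 + c * (S + x k) ≤ (1 + c * S) * (1 + c / a k) := by linear_combination hxk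
      _ ≤ (∏ i ∈ range k, (1 + c / a i)) * (1 + c / a k) := by
        gcongr
        exact ih (fun i hi => ha i (hi.trans k.lt_succ_self))
          (fun t ht => hx t (ht.trans k.lt_succ_self))

theorem isGreatest_feasible_sums {N : ℕ} (hc : 0 < c) (ha : ∀ i < N, 0 < a i) :
    IsGreatest {s : ℝ | ∃ x : Fin N → ℝ, (∀ i, 0 ≤ x i) ∧
        (∀ t : Fin N, a t * x t - c * ∑ i ∈ Iio t, x i ≤ 1) ∧ s = ∑ i, x i}
      ((∏ i ∈ range N, (1 + c / a i) - 1) / c) := by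
  constructor
  · refine ⟨fun i => tightSolution c a i,
      fun i => tightSolution_nonneg c a hc.le fun j hj => ha j (hj.trans_lt i.isLt),
      fun t => ?_, ?_⟩
    · rw [Fin.sum_Iio_eq_sum_range (tightSolution c a),
        tightSolution_constraint c a (ha t t.isLt).ne']
    · rw [Fin.sum_univ_eq_sum_range (tightSolution c a), div_eq_iff hc.ne',
        ← one_add_mul_sum_tightSolution]
      ring
  · rintro s ⟨x, -, hx, rfl⟩
    obtain ⟨y, rfl⟩ : ∃ y : ℕ → ℝ, x = fun i : Fin N => y i :=
      ⟨fun j => if h : j < N then x ⟨j, h⟩ else 0, funext fun i => by simp⟩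
    have hy := one_add_mul_sum_le_prod c a hc.le ha (x := y) fun t ht => by
      simpa only [Fin.sum_Iio_eq_sum_range y] using hx ⟨t, ht⟩
    rw [Fin.sum_univ_eq_sum_range y, le_div_iff₀ hc]
    linarith

end

theorem lp_optimal_value_general (N : ℕ) (γ α : ℝ)
    (hγ0 : 0 < γ) (hγ1 : γ < 1) (hα1 : α < 1) :
    IsGreatest {s : ℝ | ∃ x : Fin N → ℝ, (∀ i, 0 ≤ x i) ∧
        (∀ t : Fin N,
          (1 - α) * ((N : ℝ) - (t : ℕ)) * x t
            - ((1 - γ) / γ) * ∑ i ∈ Finset.Iio t, x i ≤ 1) ∧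
        s = ∑ i, x i}
      ((γ / (1 - γ)) *
        (∏ i ∈ Finset.range N, (1 + (1 - γ) / (γ * ((N : ℝ) - i) * (1 - α))) - 1)) := by
  have hc : 0 < (1 - γ) / γ := div_pos (by linarith) hγ0
  have ha : ∀ i < N, 0 < (1 - α) * ((N : ℝ) - i) := fun i hi =>
    mul_pos (by linarith) (sub_pos.mpr (by exact_mod_cast hi))
  have hterm : ∀ i : ℕ, (1 - γ) / (γ * ((N : ℝ) - i) * (1 - α)) =
      (1 - γ) / γ / ((1 - α) * ((N : ℝ) - i)) := fun i => by
    rw [div_div]; congr 1; ring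
  have hval : γ / (1 - γ) *
        (∏ i ∈ range N, (1 + (1 - γ) / (γ * ((N : ℝ) - i) * (1 - α))) - 1) =
      (∏ i ∈ range N, (1 + (1 - γ) / γ / ((1 - α) * ((N : ℝ) - i))) - 1) / ((1 - γ) / γ) := by
    simp only [hterm, div_div_eq_mul_div]
    ring
  rw [hval]
  exact isGreatest_feasible_sums _ (fun i => (1 - α) * ((N : ℝ) - i)) hc ha

/-- Optimal value of the linear program arising in the reverse greedy analysis. -/
theorem lp_optimal_value (N : ℕ) (hN : 1 ≤ N) (γ α : ℝ)
    (hγ0 : 0 < γ) (hγ1 : γ < 1) (hα0 : 0 ≤ α) (hα1 : α < 1) :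
    IsGreatest {s : ℝ | ∃ x : Fin N → ℝ, (∀ i, 0 ≤ x i) ∧
        (∀ t : Fin N,
          (1 - α) * ((N : ℝ) - (t : ℕ)) * x t
            - ((1 - γ) / γ) * ∑ i ∈ Finset.Iio t, x i ≤ 1) ∧
        s = ∑ i, x i}
      ((γ / (1 - γ)) *
        (∏ i ∈ Finset.range N, (1 + (1 - γ) / (γ * ((N : ℝ) - i) * (1 - α))) - 1)) :=
  lp_optimal_value_general N γ α hγ0 hγ1 hα1
end

section
/- Let V be a finite set with n elements, n > 2N, let S̄ ⊆ V with |S̄| = N, and define g(S) = min{1 + |S ∩ S̄|, |S|} for S ⊆ V. Then g is submodular: g(S∪{v}) − g(S) ≥ g(T∪{v}) − g(T) for all S ⊆ T ⊆ V and v ∈ V \ T. -/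
/-!
Write `g S = min (1 + |S ∩ S̄|) |S|`. Adding `v ∉ S` raises `g` by exactly one when `v ∈ S̄`
(both terms grow) or when `S ⊆ S̄` (then `|S| ≤ 1 + |S ∩ S̄|` is the active term), and leaves
it unchanged otherwise. Both conditions persist from `T` down to any `S ⊆ T`, so the marginal
gains decrease along inclusions.
-/

namespace Finset

variable {V : Type*} [DecidableEq V]

def cappedCard (A S : Finset V) : ℕ := min (1 + #(S ∩ A)) #S

lemma cappedCard_insert {A S : Finset V} {v : V} (hvS : v ∉ S) :
    cappedCard A (insert v S) = cappedCard A S + if v ∈ A ∨ S ⊆ A then 1 else 0 := by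
  have hS : #(insert v S) = #S + 1 := card_insert_of_notMem hvS
  by_cases hvA : v ∈ A
  · have hSA : #(insert v S ∩ A) = #(S ∩ A) + 1 := by
      rw [insert_inter_of_mem hvA, card_insert_of_notMem fun h => hvS (mem_of_mem_inter_left h)]
    simp only [cappedCard, hS, hSA, hvA, true_or, if_true]
    omega
  · have hle : #(S ∩ A) ≤ #S := card_le_card inter_subset_left
    have hsub : S ⊆ A ↔ #S ≤ #(S ∩ A) :=
      ⟨fun h => card_le_card (subset_inter Subset.rfl h), fun h =>
        inter_eq_left.1 (eq_of_subset_of_card_le inter_subset_left h)⟩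
    simp only [cappedCard, hS, insert_inter_of_notMem hvA, hvA, false_or, hsub]
    split_ifs <;> omega

lemma cappedCard_submodular {A S T : Finset V} {v : V} (hST : S ⊆ T) (hvT : v ∉ T) :
    cappedCard A (insert v T) + cappedCard A S ≤ cappedCard A (insert v S) + cappedCard A T := by
  rw [cappedCard_insert hvT, cappedCard_insert fun h => hvT (hST h)]
  have hcond : v ∈ A ∨ T ⊆ A → v ∈ A ∨ S ⊆ A := Or.imp_right hST.trans
  split_ifs with hT hS
  · omega
  · exact absurd (hcond hT) hS
  all_goals omega

end Finset

theorem min_card_submodular_general {V : Type*} [DecidableEq V]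
    (Sbar : Finset V) :
    ∀ (S T : Finset V) (v : V), S ⊆ T → v ∉ T →
      ((min (1 + ((insert v S) ∩ Sbar).card) (insert v S).card : ℤ)
          - (min (1 + (S ∩ Sbar).card) S.card : ℤ))
        ≥ ((min (1 + ((insert v T) ∩ Sbar).card) (insert v T).card : ℤ)
          - (min (1 + (T ∩ Sbar).card) T.card : ℤ)) := by
  intro S T v hST hvT
  have h := Finset.cappedCard_submodular (A := Sbar) hST hvT
  simp only [Finset.cappedCard] at h
  omega

/-- The function `g(S) = min(1 + |S ∩ S̄|, |S|)` is submodular. -/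
theorem min_card_submodular {V : Type*} [DecidableEq V] [Fintype V]
    (n N : ℕ) (hn : Fintype.card V = n) (h2N : 2 * N < n)
    (Sbar : Finset V) (hSbar : Sbar.card = N) :
    ∀ (S T : Finset V) (v : V), S ⊆ T → v ∉ T →
      ((min (1 + ((insert v S) ∩ Sbar).card) (insert v S).card : ℤ)
          - (min (1 + (S ∩ Sbar).card) S.card : ℤ))
        ≥ ((min (1 + ((insert v T) ∩ Sbar).card) (insert v T).card : ℤ)
          - (min (1 + (T ∩ Sbar).card) T.card : ℤ)) :=
  min_card_submodular_general Sbar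
end

section
/- Let (V, F) be a matroid whose maximum independent sets have cardinality N, and let f : 2^V → ℝ be strictly increasing with submodularity ratio γ ∈ (0,1) and curvature α ∈ [0,1). If R^r is the output of the greedy algorithm (at each step adding the feasible element with the smallest marginal gain until |R| = N) and R* is the optimal solution of min{f(R) : R ∈ F, |R| ≥ N}, then (f(R^r) − f(∅)) / (f(R*) − f(∅)) ≤ (γ/(1−γ))·((2N+1)^{(1−γ)/(γ(1−α))} − 1). -/
/-- A matroid on a finite ground set `V`, given as a collection of independent sets. -/
structure IsMatroid {V : Type*} [DecidableEq V] [Fintype V] (F : Set (Finset V)) : Prop where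
  empty_mem : ∅ ∈ F
  downward : ∀ S ∈ F, ∀ S' ⊆ S, S' ∈ F
  exchange : ∀ S₁ ∈ F, ∀ S₂ ∈ F, S₁.card < S₂.card → ∃ v ∈ S₂ \ S₁, insert v S₁ ∈ F

/-! With `B = f R* - f ∅` and `θ = (1 - γ) / (γ (1 - α))`, the potential
`f (R t) - f ∅ + γ B / (1 - γ)` grows at step `t` by a factor at most `1 + θ / (N - t)`.
Indeed, the matroid lets us augment `R t` by a set `A ⊆ R*` of `N - t` elements: curvature and
greedy minimality bound `N - t` times the greedy gain by `f (R t ∪ A) - f (R t)`, while the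
submodularity ratio bounds `γ (f (R t ∪ A) - f A)` by `f (R t) - f ∅`, and `f A ≤ f R*`.
The product of the factors is at most `(2N + 1) ^ θ` because `H_N ≤ log (2N + 1)`. -/

open Finset

-- The first term of `log (1 + a⁻¹) = 2 ∑ₖ (2k + 1)⁻¹ (2a + 1)^-(2k+1)` at `a = n + 1/2`.
theorem inv_add_one_le_log_div (n : ℕ) :
    ((n : ℝ) + 1)⁻¹ ≤ Real.log ((2 * n + 3) / (2 * n + 1)) := by
  have hn : (0 : ℝ) < n + 1 / 2 := by positivity
  have h := le_hasSum (Real.hasSum_log_one_add_inv hn) 0 (fun k _ => by positivity)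
  have hfirst : 2 * (1 / (2 * ((0 : ℕ) : ℝ) + 1)) * (1 / (2 * ((n : ℝ) + 1 / 2) + 1)) ^ (2 * 0 + 1)
      = ((n : ℝ) + 1)⁻¹ := by
    norm_num
    field_simp
    ring
  have hratio : 1 + ((n : ℝ) + 1 / 2)⁻¹ = (2 * n + 3) / (2 * n + 1) := by
    field_simp
    ring
  rwa [hfirst, hratio] at h

theorem harmonic_le_log_two_mul_add_one (n : ℕ) : (harmonic n : ℝ) ≤ Real.log (2 * n + 1) := by
  induction n with
  | zero => simp
  | succ n ih =>
    have hlog : Real.log (2 * (n + 1 : ℕ) + 1) =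
        Real.log (2 * n + 1) + Real.log ((2 * n + 3) / (2 * n + 1)) := by
      rw [← Real.log_mul (by positivity) (by positivity)]
      congr 1
      push_cast
      field_simp
      ring
    rw [harmonic_succ, Rat.cast_add, hlog]
    push_cast
    linarith [inv_add_one_le_log_div n]

theorem prod_one_add_div_le_rpow {θ : ℝ} (hθ : 0 ≤ θ) (n : ℕ) :
    ∏ k ∈ range n, (1 + θ / (k + 1)) ≤ (2 * n + 1) ^ θ :=
  calc ∏ k ∈ range n, (1 + θ / (k + 1))
      ≤ ∏ k ∈ range n, Real.exp (θ / (k + 1)) :=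
        prod_le_prod (fun k _ => by positivity) fun k _ => by
          linarith [Real.add_one_le_exp (θ / (k + 1))]
    _ = Real.exp (θ * harmonic n) := by
        rw [← Real.exp_sum, harmonic, Rat.cast_sum, mul_sum]
        push_cast
        simp only [div_eq_mul_inv]
    _ ≤ Real.exp (θ * Real.log (2 * n + 1)) := by
        gcongr
        exact harmonic_le_log_two_mul_add_one n
    _ = (2 * n + 1) ^ θ := by
        rw [Real.rpow_def_of_pos (by positivity), mul_comm]

theorem le_mul_prod_of_le_mul {u c : ℕ → ℝ} {n : ℕ} (hc : ∀ t < n, 0 ≤ c t)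
    (hu : ∀ t < n, u (t + 1) ≤ u t * c t) : u n ≤ u 0 * ∏ t ∈ range n, c t := by
  induction n with
  | zero => simp
  | succ n ih =>
    rw [prod_range_succ, ← mul_assoc]
    calc u (n + 1) ≤ u n * c n := hu n n.lt_succ_self
      _ ≤ _ := mul_le_mul_of_nonneg_right (ih (fun t ht => hc t (by omega))
          fun t ht => hu t (by omega)) (hc n n.lt_succ_self)

theorem le_div_mul_rpow_sub_one_of_mul_sub_le {x : ℕ → ℝ} {N : ℕ} {a b c : ℝ} (ha : 0 < a)
    (hb : 0 ≤ b) (hc : 0 < c) (hx0 : x 0 = 0)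
    (hx : ∀ t < N, a * (N - t : ℕ) * (x (t + 1) - x t) ≤ c * x t + b) :
    x N ≤ b / c * ((2 * N + 1) ^ (c / a) - 1) := by
  have hθ : 0 < c / a := div_pos hc ha
  have hrec : ∀ t < N, x (t + 1) + b / c ≤ (x t + b / c) * (1 + c / a / (N - t : ℕ)) := by
    intro t ht
    have hm : (0 : ℝ) < (N - t : ℕ) := by exact_mod_cast Nat.sub_pos_of_lt ht
    have hgain : x (t + 1) - x t ≤ (c * x t + b) / (a * (N - t : ℕ)) := by
      rw [le_div_iff₀ (by positivity)]
      linarith [hx t ht]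
    calc x (t + 1) + b / c ≤ x t + b / c + (c * x t + b) / (a * (N - t : ℕ)) := by linarith
      _ = (x t + b / c) * (1 + c / a / (N - t : ℕ)) := by field_simp
  have hprod : ∏ t ∈ range N, (1 + c / a / (N - t : ℕ)) ≤ (2 * N + 1) ^ (c / a) := by
    rw [← prod_range_reflect]
    convert prod_one_add_div_le_rpow hθ.le N using 3 with t ht
    rw [mem_range] at ht
    rw [show N - (N - 1 - t) = t + 1 by omega]
    push_cast
    ring
  have hacc := le_mul_prod_of_le_mul (u := fun t => x t + b / c) (fun t _ => by positivity) hrec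
  simp only [hx0, zero_add] at hacc
  linarith [mul_le_mul_of_nonneg_left hprod (div_nonneg hb hc.le)]

section SetFunction

variable {V : Type*} [DecidableEq V]

def HasSubmodularityRatio (f : Finset V → ℝ) (γ : ℝ) : Prop :=
  ∀ (S U : Finset V) (v : V), v ∉ S ∪ U →
    γ * (f (insert v (S ∪ U)) - f (S ∪ U)) ≤ f (insert v S) - f S

def HasCurvature (f : Finset V → ℝ) (α : ℝ) : Prop :=
  ∀ (S U : Finset V) (v : V), v ∉ S ∪ U →
    (1 - α) * (f (insert v S) - f S) ≤ f (insert v (S ∪ U)) - f (S ∪ U)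

theorem HasSubmodularityRatio.mul_sub_le {f : Finset V → ℝ} {γ : ℝ}
    (hf : HasSubmodularityRatio f γ) {A S : Finset V} (hAS : Disjoint A S) :
    γ * (f (A ∪ S) - f A) ≤ f S - f ∅ := by
  induction S using Finset.induction_on with
  | empty => simp
  | insert u S hu ih =>
    rw [disjoint_insert_right] at hAS
    have hgain := hf S A u (by simp [hu, hAS.1])
    rw [union_comm S A] at hgain
    rw [union_insert]
    linarith [ih hAS.2]

theorem HasCurvature.card_mul_le_sub {f : Finset V → ℝ} {α : ℝ} (hf : HasCurvature f α)
    {S A : Finset V} (hSA : Disjoint S A) {c : ℝ}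
    (hc : ∀ v ∈ A, c ≤ (1 - α) * (f (insert v S) - f S)) :
    A.card * c ≤ f (S ∪ A) - f S := by
  induction A using Finset.induction_on with
  | empty => simp
  | insert u A hu ih =>
    rw [disjoint_insert_right] at hSA
    have hgain := hf S A u (by simp [hu, hSA.1])
    rw [union_insert, card_insert_of_notMem hu]
    push_cast
    linarith [ih hSA.2 fun v hv => hc v (mem_insert_of_mem hv), hc u (mem_insert_self u A)]

theorem mem_and_card_eq_of_insert_step {F : Set (Finset V)} {R : ℕ → Finset V} {N : ℕ}
    (h0 : ∅ ∈ F) (hR0 : R 0 = ∅)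
    (hR : ∀ t < N, ∃ r, r ∉ R t ∧ insert r (R t) ∈ F ∧ R (t + 1) = insert r (R t)) :
    ∀ t ≤ N, R t ∈ F ∧ (R t).card = t
  | 0, _ => by simpa [hR0] using h0
  | t + 1, ht => by
    obtain ⟨r, hr, hrF, hRt⟩ := hR t ht
    rw [hRt, card_insert_of_notMem hr, (mem_and_card_eq_of_insert_step h0 hR0 hR t (by omega)).2]
    exact ⟨hrF, rfl⟩

variable [Fintype V] {F : Set (Finset V)}

theorem IsMatroid.augment (hF : IsMatroid F) {S T : Finset V} (hS : S ∈ F) (hT : T ∈ F) :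
    ∀ {m : ℕ}, S.card + m ≤ T.card → ∃ A ⊆ T \ S, A.card = m ∧ S ∪ A ∈ F
  | 0, _ => ⟨∅, empty_subset _, card_empty, by simpa using hS⟩
  | m + 1, hm => by
    obtain ⟨A, hAT, hAcard, hSA⟩ := hF.augment hS hT (m := m) (by omega)
    have hdisj : Disjoint S A := disjoint_of_subset_right hAT disjoint_sdiff
    have hlt : (S ∪ A).card < T.card := by rw [card_union_of_disjoint hdisj]; omega
    obtain ⟨v, hv, hvF⟩ := hF.exchange _ hSA T hT hlt
    simp only [mem_sdiff, mem_union, not_or] at hv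
    refine ⟨insert v A, insert_subset (mem_sdiff.2 ⟨hv.1, hv.2.1⟩) hAT, ?_, ?_⟩
    · rw [card_insert_of_notMem hv.2.2, hAcard]
    · rwa [union_insert]

theorem IsMatroid.mul_min_gain_le (hF : IsMatroid F) {f : Finset V → ℝ} (hmono : Monotone f)
    {γ α : ℝ} (hsub : HasSubmodularityRatio f γ) (hcurv : HasCurvature f α) (hγ : 0 ≤ γ)
    (hα : α ≤ 1) {S T : Finset V} (hS : S ∈ F) (hT : T ∈ F) {m : ℕ} (hm : S.card + m ≤ T.card)
    {r : V} (hr : ∀ w ∉ S, insert w S ∈ F → f (insert r S) - f S ≤ f (insert w S) - f S) :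
    γ * (1 - α) * m * (f (insert r S) - f S) ≤ (1 - γ) * (f S - f ∅) + γ * (f T - f ∅) := by
  obtain ⟨A, hAT, rfl, hSA⟩ := hF.augment hS hT hm
  have hdisj : Disjoint S A := disjoint_of_subset_right hAT disjoint_sdiff
  have hforward : A.card * ((1 - α) * (f (insert r S) - f S)) ≤ f (S ∪ A) - f S := by
    refine hcurv.card_mul_le_sub hdisj fun v hv => mul_le_mul_of_nonneg_left ?_ (by linarith)
    refine hr v (disjoint_right.1 hdisj hv) (hF.downward _ hSA _ ?_)
    exact insert_subset (mem_union_right S hv) subset_union_left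
  have hbackward : γ * (f (A ∪ S) - f A) ≤ f S - f ∅ := hsub.mul_sub_le hdisj.symm
  have hfA : f A ≤ f T := hmono fun _ hv => (mem_sdiff.1 (hAT hv)).1
  rw [union_comm] at hbackward
  linarith [mul_le_mul_of_nonneg_left hforward hγ, mul_le_mul_of_nonneg_left hfA hγ]

end SetFunction

theorem reverse_greedy_guarantee_general {V : Type*} [DecidableEq V] [Fintype V]
    (F : Set (Finset V)) (hF : IsMatroid F) (N : ℕ)
    (f : Finset V → ℝ) (hstrict : ∀ S T : Finset V, S ⊂ T → f S < f T)
    (γ α : ℝ) (hγ0 : 0 < γ) (hγ1 : γ < 1) (hα1 : α < 1)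
    (hsub : ∀ (S U : Finset V) (v : V), v ∉ S ∪ U →
      γ * (f (insert v (S ∪ U)) - f (S ∪ U)) ≤ f (insert v S) - f S)
    (hcurv : ∀ (S U : Finset V) (v : V), v ∉ S ∪ U →
      f (insert v (S ∪ U)) - f (S ∪ U) ≥ (1 - α) * (f (insert v S) - f S))
    (R : ℕ → Finset V) (hR0 : R 0 = ∅)
    (hgreedy : ∀ t < N, ∃ r : V, r ∉ R t ∧ insert r (R t) ∈ F ∧
      R (t + 1) = insert r (R t) ∧
      ∀ w : V, w ∉ R t → insert w (R t) ∈ F →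
        f (insert r (R t)) - f (R t) ≤ f (insert w (R t)) - f (R t))
    (Rstar : Finset V) (hRstar : Rstar ∈ F) (hRstarN : N ≤ Rstar.card) :
    (f (R N) - f ∅) / (f Rstar - f ∅) ≤
      (γ / (1 - γ)) * ((2 * (N : ℝ) + 1) ^ ((1 - γ) / (γ * (1 - α))) - 1) := by
  have hmono : Monotone f := fun S T hST =>
    hST.eq_or_ssubset.elim (fun h => h ▸ le_rfl) fun h => (hstrict S T h).le
  have hgap : 0 ≤ f Rstar - f ∅ := sub_nonneg.2 (hmono (empty_subset _))
  have h1γ : 0 < 1 - γ := sub_pos.2 hγ1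
  have hγα : 0 < γ * (1 - α) := mul_pos hγ0 (sub_pos.2 hα1)
  have hR := mem_and_card_eq_of_insert_step hF.empty_mem hR0 fun t ht =>
    (hgreedy t ht).imp fun _ h => ⟨h.1, h.2.1, h.2.2.1⟩
  have hstep : ∀ t < N, γ * (1 - α) * (N - t : ℕ) * ((f (R (t + 1)) - f ∅) - (f (R t) - f ∅)) ≤
      (1 - γ) * (f (R t) - f ∅) + γ * (f Rstar - f ∅) := by
    intro t ht
    obtain ⟨hRt, hcard⟩ := hR t ht.le
    obtain ⟨r, -, -, hRsucc, hmin⟩ := hgreedy t ht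
    rw [hRsucc, sub_sub_sub_cancel_right]
    exact hF.mul_min_gain_le hmono hsub hcurv hγ0.le hα1.le hRt hRstar (by omega) hmin
  have hbound := le_div_mul_rpow_sub_one_of_mul_sub_le (x := fun t => f (R t) - f ∅) hγα
    (mul_nonneg hγ0.le hgap) h1γ (by simp [hR0]) hstep
  have hpow : 1 ≤ (2 * (N : ℝ) + 1) ^ ((1 - γ) / (γ * (1 - α))) :=
    Real.one_le_rpow (by linarith [N.cast_nonneg (α := ℝ)]) (div_pos h1γ hγα).le
  refine div_le_of_le_mul₀ hgap ?_ (hbound.trans_eq (by ring))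
  exact mul_nonneg (div_nonneg hγ0.le h1γ.le) (sub_nonneg.2 hpow)

/-- Performance guarantee for the reverse greedy algorithm minimizing a strictly increasing,
`γ`-submodular, `α`-supermodular function over a matroid with cardinality lower bound `N`. -/
theorem reverse_greedy_guarantee {V : Type*} [DecidableEq V] [Fintype V]
    (F : Set (Finset V)) (hF : IsMatroid F) (N : ℕ)
    (hcard_le : ∀ S ∈ F, S.card ≤ N) (hcard_max : ∃ S ∈ F, S.card = N)
    (f : Finset V → ℝ) (hstrict : ∀ S T : Finset V, S ⊂ T → f S < f T)
    (γ α : ℝ) (hγ0 : 0 < γ) (hγ1 : γ < 1) (hα0 : 0 ≤ α) (hα1 : α < 1)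
    (hsub : ∀ (S U : Finset V) (v : V), v ∉ S ∪ U →
      γ * (f (insert v (S ∪ U)) - f (S ∪ U)) ≤ f (insert v S) - f S)
    (hcurv : ∀ (S U : Finset V) (v : V), v ∉ S ∪ U →
      f (insert v (S ∪ U)) - f (S ∪ U) ≥ (1 - α) * (f (insert v S) - f S))
    (R : ℕ → Finset V) (hR0 : R 0 = ∅)
    (hgreedy : ∀ t < N, ∃ r : V, r ∉ R t ∧ insert r (R t) ∈ F ∧
      R (t + 1) = insert r (R t) ∧
      ∀ w : V, w ∉ R t → insert w (R t) ∈ F →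
        f (insert r (R t)) - f (R t) ≤ f (insert w (R t)) - f (R t))
    (Rstar : Finset V) (hRstar : Rstar ∈ F) (hRstarN : N ≤ Rstar.card)
    (hopt : ∀ T ∈ F, N ≤ T.card → f Rstar ≤ f T)
    (hgap : f ∅ < f Rstar) :
    (f (R N) - f ∅) / (f Rstar - f ∅) ≤
      (γ / (1 - γ)) * ((2 * (N : ℝ) + 1) ^ ((1 - γ) / (γ * (1 - α))) - 1) :=
  reverse_greedy_guarantee_general F hF N f hstrict γ α hγ0 hγ1 hα1 hsub hcurv R hR0 hgreedy Rstar
    hRstar hRstarN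
end

section
/- In the setting of the reverse greedy lemma: let (V,F) be a matroid with maximum independent sets of size N, f increasing with submodularity ratio γ and curvature α, R* ∈ F with |R*| = N the optimum, and R^t = {r₁,…,r_t} the greedy iterates with marginal gains ρ_i = f(R^i) − f(R^{i−1}), where the greedy picks the minimum feasible marginal gain at each step. Then for any t ∈ {0,…,N−1}: f(R*) − f(∅) ≥ (1 − 1/γ)·∑_{i : r_i ∈ R^t \ R*} ρ_i + ∑_{i : r_i ∈ R^t ∩ R*} ρ_i + (1−α)(N−t)·ρ_{t+1}. -/
/-- Key lemma of the reverse greedy analysis: per-iteration bound on the marginal gains. -/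
theorem reverse_greedy_lemma {V : Type*} [DecidableEq V] [Fintype V]
    (F : Set (Finset V)) (hF : IsMatroid F) (N : ℕ)
    (hcard_le : ∀ S ∈ F, S.card ≤ N) (hcard_max : ∃ S ∈ F, S.card = N)
    (f : Finset V → ℝ) (hmono : ∀ S T : Finset V, S ⊆ T → f S ≤ f T)
    (γ α : ℝ) (hγ0 : 0 < γ) (hγ1 : γ ≤ 1) (hα0 : 0 ≤ α) (hα1 : α < 1)
    (hsub : ∀ (S U : Finset V) (v : V), v ∉ S ∪ U →
      γ * (f (insert v (S ∪ U)) - f (S ∪ U)) ≤ f (insert v S) - f S)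
    (hcurv : ∀ (S U : Finset V) (v : V), v ∉ S ∪ U →
      f (insert v (S ∪ U)) - f (S ∪ U) ≥ (1 - α) * (f (insert v S) - f S))
    (Rstar : Finset V) (hRstar : Rstar ∈ F) (hRstarN : Rstar.card = N)
    (R : ℕ → Finset V) (r : ℕ → V) (hR0 : R 0 = ∅)
    (hstep : ∀ i < N, r (i + 1) ∉ R i ∧ R (i + 1) = insert (r (i + 1)) (R i) ∧
      R (i + 1) ∈ F ∧
      ∀ w : V, w ∉ R i → insert w (R i) ∈ F →
        f (insert (r (i + 1)) (R i)) - f (R i) ≤ f (insert w (R i)) - f (R i)) :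
    ∀ t < N,
      f Rstar - f ∅ ≥
        (1 - 1 / γ) *
            (∑ i ∈ (Finset.Icc 1 t).filter (fun i => r i ∉ Rstar),
              (f (R i) - f (R (i - 1))))
          + (∑ i ∈ (Finset.Icc 1 t).filter (fun i => r i ∈ Rstar),
              (f (R i) - f (R (i - 1))))
          + (1 - α) * ((N : ℝ) - t) * (f (R (t + 1)) - f (R t)) := by
  intro t ht
  have hRF : ∀ i, i ≤ N → R i ∈ F := by
    intro i hi
    cases i with
    | zero => rw [hR0]; exact hF.empty_mem
    | succ n => exact (hstep n (by omega)).2.2.1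
  have hRcard : ∀ i, i ≤ N → (R i).card = i := by
    intro i hi
    induction i with
    | zero => simp [hR0]
    | succ n ih =>
      rw [(hstep n (by omega)).2.1,
        Finset.card_insert_of_notMem (hstep n (by omega)).1, ih (by omega)]
  -- telescoping
  have htel : ∀ u, u ≤ N → f (R u) - f (R 0) =
      ∑ i ∈ Finset.Icc 1 u, (f (R i) - f (R (i - 1))) := by
    intro u hu
    induction u with
    | zero => simp
    | succ n ih =>
      rw [Finset.sum_Icc_succ_top (by omega : 1 ≤ n + 1)]
      have h1 := ih (by omega)
      have h2 : n + 1 - 1 = n := by omega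
      rw [h2]; linarith
  -- Part B : submodularity ratio bound
  have hB : ∀ j, j ≤ t → f (Rstar ∪ R j) - f Rstar ≤
      (1 / γ) * ∑ i ∈ (Finset.Icc 1 j).filter (fun i => r i ∉ Rstar),
        (f (R i) - f (R (i - 1))) := by
    intro j hj
    induction j with
    | zero => simp [hR0]
    | succ n ih =>
      have hnN : n < N := by omega
      obtain ⟨hnot, heq, _, hmin⟩ := hstep n hnN
      have hIcc : Finset.Icc 1 (n + 1) = insert (n + 1) (Finset.Icc 1 n) := by
        ext x; simp; omega
      have hih := ih (by omega)
      by_cases hc : r (n + 1) ∈ Rstar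
      · have h1 : Rstar ∪ R (n + 1) = Rstar ∪ R n := by
          rw [heq, Finset.union_insert,
            Finset.insert_eq_self.mpr (Finset.mem_union_left _ hc)]
        have h2 : (Finset.Icc 1 (n + 1)).filter (fun i => r i ∉ Rstar)
            = (Finset.Icc 1 n).filter (fun i => r i ∉ Rstar) := by
          rw [hIcc, Finset.filter_insert]; simp [hc]
        rw [h1, h2]; exact hih
      · have hvnot : r (n + 1) ∉ R n ∪ Rstar := by
          simp only [Finset.mem_union]; tauto
        have hkey := hsub (R n) Rstar (r (n + 1)) hvnot
        have hset : insert (r (n + 1)) (R n ∪ Rstar) = Rstar ∪ R (n + 1) := by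
          rw [heq]; ext x; simp; tauto
        have hset2 : R n ∪ Rstar = Rstar ∪ R n := Finset.union_comm _ _
        rw [hset, hset2] at hkey
        have h2 : (Finset.Icc 1 (n + 1)).filter (fun i => r i ∉ Rstar)
            = insert (n + 1) ((Finset.Icc 1 n).filter (fun i => r i ∉ Rstar)) := by
          rw [hIcc, Finset.filter_insert]; simp [hc]
        have hnotmem : (n + 1) ∉ (Finset.Icc 1 n).filter (fun i => r i ∉ Rstar) := by
          simp
        rw [h2, Finset.sum_insert hnotmem]
        have h3 : n + 1 - 1 = n := by omega
        rw [h3]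
        -- from hkey : γ * (f (Rstar ∪ R (n+1)) - f (Rstar ∪ R n)) ≤ f (insert (r (n+1)) (R n)) - f (R n)
        rw [← heq] at hkey
        have hdiv : f (Rstar ∪ R (n + 1)) - f (Rstar ∪ R n) ≤
            (1 / γ) * (f (R (n + 1)) - f (R n)) := by
          rw [one_div, ← div_eq_inv_mul, le_div_iff₀ hγ0]
          nlinarith
        have : (1 / γ) * ((f (R (n + 1)) - f (R n)) +
            ∑ i ∈ (Finset.Icc 1 n).filter (fun i => r i ∉ Rstar),
              (f (R i) - f (R (i - 1))))
            = (1 / γ) * (f (R (n + 1)) - f (R n)) +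
              (1 / γ) * ∑ i ∈ (Finset.Icc 1 n).filter (fun i => r i ∉ Rstar),
                (f (R i) - f (R (i - 1))) := by ring
        rw [this]
        linarith
  -- Part A : matroid augmentation
  have hAug : ∃ B ∈ F, R t ⊆ B ∧ B ⊆ R t ∪ Rstar ∧ B.card = N := by
    have key : ∀ k (S : Finset V), S ∈ F → S ⊆ R t ∪ Rstar → S.card + k = N →
        ∃ B ∈ F, S ⊆ B ∧ B ⊆ R t ∪ Rstar ∧ B.card = N := by
      intro k
      induction k with
      | zero => intro S hS hsub' hc; exact ⟨S, hS, subset_refl _, hsub', by omega⟩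
      | succ k ih =>
        intro S hS hsub' hc
        obtain ⟨v, hv, hins⟩ := hF.exchange S hS Rstar hRstar (by omega)
        simp only [Finset.mem_sdiff] at hv
        obtain ⟨B, hBF, h1, h2, h3⟩ := ih (insert v S) hins
          (by
            intro x hx
            rcases Finset.mem_insert.mp hx with h | h
            · subst h; exact Finset.mem_union_right _ hv.1
            · exact hsub' h)
          (by rw [Finset.card_insert_of_notMem hv.2]; omega)
        exact ⟨B, hBF, (Finset.subset_insert _ _).trans h1, h2, h3⟩
    exact key (N - t) (R t) (hRF t ht.le) Finset.subset_union_left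
      (by rw [hRcard t ht.le]; omega)
  obtain ⟨B, hBF, hRtB, hBsub, hBcard⟩ := hAug
  obtain ⟨hnot, heq, _, hmin⟩ := hstep t ht
  -- Part A' : curvature growth
  have hgrow : ∀ A : Finset V, A ⊆ B \ R t →
      (1 - α) * (A.card : ℝ) * (f (R (t + 1)) - f (R t)) ≤ f (R t ∪ A) - f (R t) := by
    intro A
    induction A using Finset.induction_on with
    | empty => intro _; simp
    | @insert v A hvA ih =>
      intro hsubA
      have hv : v ∈ B \ R t := hsubA (Finset.mem_insert_self _ _)
      have hA : A ⊆ B \ R t := fun x hx => hsubA (Finset.mem_insert_of_mem hx)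
      simp only [Finset.mem_sdiff] at hv
      have hvRt : v ∉ R t := hv.2
      have hfeas : insert v (R t) ∈ F := by
        apply hF.downward B hBF
        intro x hx
        rcases Finset.mem_insert.mp hx with h | h
        · subst h; exact hv.1
        · exact hRtB h
      have hgreedy := hmin v hvRt hfeas
      rw [← heq] at hgreedy
      have hvnot : v ∉ R t ∪ A := by
        simp only [Finset.mem_union]; tauto
      have hck := hcurv (R t) A v hvnot
      have hih := ih hA
      have hset : R t ∪ insert v A = insert v (R t ∪ A) :=
        Finset.union_insert _ _ _
      rw [hset, Finset.card_insert_of_notMem hvA]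
      push_cast
      nlinarith [hih, hck, hgreedy, sub_nonneg.mpr hα1.le]
  have hcardBd : ((B \ R t).card : ℝ) = (N : ℝ) - t := by
    rw [Finset.card_sdiff_of_subset hRtB, hBcard, hRcard t ht.le]
    push_cast [Nat.cast_sub ht.le]
    ring
  have hA' : (1 - α) * ((N : ℝ) - t) * (f (R (t + 1)) - f (R t)) ≤
      f (Rstar ∪ R t) - f (R t) := by
    have h1 := hgrow (B \ R t) (subset_refl _)
    rw [hcardBd] at h1
    have h2 : R t ∪ (B \ R t) = B := by
      ext x; simp only [Finset.mem_union, Finset.mem_sdiff]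
      constructor
      · rintro (h | h)
        · exact hRtB h
        · exact h.1
      · intro h; by_cases hx : x ∈ R t <;> tauto
    rw [h2] at h1
    have h3 : f B ≤ f (Rstar ∪ R t) := by
      apply hmono
      intro x hx
      rcases Finset.mem_union.mp (hBsub hx) with h | h
      · exact Finset.mem_union_right _ h
      · exact Finset.mem_union_left _ h
    linarith
  -- combine
  have hBt := hB t le_rfl
  have htelt := htel t ht.le
  rw [hR0] at htelt
  have hsplit : ∑ i ∈ Finset.Icc 1 t, (f (R i) - f (R (i - 1)))
      = (∑ i ∈ (Finset.Icc 1 t).filter (fun i => r i ∉ Rstar),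
          (f (R i) - f (R (i - 1))))
        + (∑ i ∈ (Finset.Icc 1 t).filter (fun i => r i ∈ Rstar),
          (f (R i) - f (R (i - 1)))) := by
    rw [← Finset.sum_filter_add_sum_filter_not (Finset.Icc 1 t)
      (fun i => r i ∉ Rstar)]
    simp only [not_not]
  rw [hsplit] at htelt
  set Sout := ∑ i ∈ (Finset.Icc 1 t).filter (fun i => r i ∉ Rstar),
    (f (R i) - f (R (i - 1))) with hSout
  set Sin := ∑ i ∈ (Finset.Icc 1 t).filter (fun i => r i ∈ Rstar),
    (f (R i) - f (R (i - 1))) with hSin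
  have hexp : (1 - 1 / γ) * Sout = Sout - (1 / γ) * Sout := by ring
  linarith
end
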